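/- arXiv:2502.19249 — 3 statements merged into one kernel-verified Lean document; each statement's English description precedes it below -/
import Mathlib

section
/- For every k ≥ 2, the language k-Shuffle Dyck is not context-free. -/
/-- The `2k`-symbol bracket alphabet is `Fin k × Bool`: `(κ, true)` is the opening
bracket `(_κ` and `(κ, false)` is the closing bracket `)_κ`. `k`-Shuffle Dyck consists
of all words `w` such that for every bracket type `κ`, `w` contains equally many `(_κ`
and `)_κ`, and every prefix of `w` contains at least as many `(_κ` as `)_κ`. -/
def ShuffleDyck (k : ℕ) : Language (Fin k × Bool) :=
  {w | ∀ κ : Fin k, w.count (κ, true) = w.count (κ, false) ∧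
    ∀ p : List (Fin k × Bool), p <+: w → p.count (κ, false) ≤ p.count (κ, true)}

/-!
A parse tree of height `h` whose rules have right-hand sides of length at most `m` yields at
most `m ^ h` symbols. So a long enough word has a parse tree containing a subtree of height
`D + 1`, `D` the number of nonterminals with rules, and on a longest path of that subtree some
nonterminal repeats. Cutting out, or repeating, the part of the tree between the two
occurrences pumps the word; if the parse tree has minimal size, the pumped part `v y` is not
empty.

Pump the word `(_i^p (_j^p )_i^p )_j^p` down to `u x z`. Both words are balanced, so `v y`
is balanced and contains an opening and a closing bracket of one type. But these lie more than
`p` apart in the word, while the window `v x y` has length at most `p`.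
-/

open List

inductive ParseTree (T N : Type*)
  | leaf (s : Symbol T N)
  | node (n : N) (children : List (ParseTree T N))

namespace ParseTree

variable {T N : Type*}

def root : ParseTree T N → Symbol T N
  | leaf s => s
  | node n _ => .nonterminal n

def yield : ParseTree T N → List (Symbol T N)
  | leaf s => [s]
  | node _ c => (c.map yield).flatten

def height : ParseTree T N → ℕ
  | leaf _ => 0
  | node _ c => (c.map height).foldr max 0 + 1

def size : ParseTree T N → ℕ
  | leaf _ => 1
  | node _ c => (c.map size).sum + 1

theorem height_lt_height_node {t : ParseTree T N} {n : N} {c : List (ParseTree T N)}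
    (ht : t ∈ c) : t.height < (node n c).height := by
  induction c with
  | nil => cases ht
  | cons u c ih =>
    simp only [height, map_cons, foldr_cons] at ih ⊢
    rcases mem_cons.1 ht with rfl | ht
    · omega
    · have := ih ht; omega

theorem exists_mem_height_eq {n : N} {c : List (ParseTree T N)} {h : ℕ}
    (hc : (node n c).height = h + 1) (hh : 0 < h) : ∃ t ∈ c, t.height = h := by
  induction c with
  | nil => simp [height] at hc; omega
  | cons u c ih =>
    simp only [height, map_cons, foldr_cons] at ih hc
    rcases le_total u.height ((c.map height).foldr max 0) with hu | hu
    · obtain ⟨t, ht, htd⟩ := ih (by omega)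
      exact ⟨t, mem_cons_of_mem u ht, htd⟩
    · exact ⟨u, mem_cons_self, by omega⟩

/-- A one-hole context, listed from the root down to the hole: each frame is the label of a node
on the path to the hole, with the children of that node to the left and to the right of the path. -/
abbrev Context (T N : Type*) := List (N × List (ParseTree T N) × List (ParseTree T N))

def plug : Context T N → ParseTree T N → ParseTree T N
  | [], s => s
  | (n, l, r) :: K, s => node n (l ++ plug K s :: r)

def leftYield : Context T N → List (Symbol T N)
  | [] => []
  | (_, l, _) :: K => (l.map yield).flatten ++ leftYield K

def rightYield : Context T N → List (Symbol T N)
  | [] => []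
  | (_, _, r) :: K => rightYield K ++ (r.map yield).flatten

theorem plug_append (K K' : Context T N) (s : ParseTree T N) :
    plug (K ++ K') s = plug K (plug K' s) := by
  induction K with
  | nil => rfl
  | cons f K ih => obtain ⟨n, l, r⟩ := f; simp [plug, ih]

theorem root_plug_congr {K : Context T N} {s s' : ParseTree T N} (h : s.root = s'.root) :
    (plug K s).root = (plug K s').root := by
  cases K with
  | nil => exact h
  | cons f K => rfl

theorem yield_plug (K : Context T N) (s : ParseTree T N) :
    (plug K s).yield = leftYield K ++ s.yield ++ rightYield K := by
  induction K with
  | nil => simp [plug, leftYield, rightYield]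
  | cons f K ih => obtain ⟨n, l, r⟩ := f; simp [plug, yield, leftYield, rightYield, ih]

theorem yield_iterate_plug (K : Context T N) (s : ParseTree T N) (i : ℕ) :
    ((plug K)^[i] s).yield =
      (replicate i (leftYield K)).flatten ++ s.yield ++ (replicate i (rightYield K)).flatten := by
  induction i with
  | zero => simp
  | succ i ih =>
    rw [Function.iterate_succ_apply', yield_plug, ih, replicate_succ, replicate_succ',
      flatten_cons, flatten_append, flatten_singleton]
    simp only [append_assoc]

theorem size_le_size_plug (K : Context T N) (s : ParseTree T N) :
    s.size + K.length ≤ (plug K s).size := by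
  induction K with
  | nil => simp [plug]
  | cons f K ih =>
    obtain ⟨n, l, r⟩ := f
    simp only [plug, size, map_append, map_cons, sum_append, sum_cons, length_cons]
    omega

theorem size_plug_lt_size_plug (K : Context T N) {s s' : ParseTree T N}
    (h : s.size < s'.size) : (plug K s).size < (plug K s').size := by
  induction K with
  | nil => exact h
  | cons f K ih =>
    obtain ⟨n, l, r⟩ := f
    simp only [plug, size, map_append, map_cons, sum_append, sum_cons]
    omega

theorem exists_plug_height_eq {h : ℕ} (hh : 0 < h) {t : ParseTree T N} (ht : h ≤ t.height) :
    ∃ K s, t = plug K s ∧ s.height = h := by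
  obtain ⟨d, hd⟩ := Nat.exists_eq_add_of_le ht
  induction d generalizing t with
  | zero => exact ⟨[], t, rfl, hd⟩
  | succ d ih =>
    rcases t with _ | ⟨n, c⟩
    · simp [height] at hd
    · obtain ⟨t, ht, htd⟩ := exists_mem_height_eq (h := h + d) hd (by omega)
      obtain ⟨l, r, rfl⟩ := append_of_mem ht
      obtain ⟨K, s, rfl, hs⟩ := ih (by omega) htd
      exact ⟨(n, l, r) :: K, s, rfl, hs⟩

end ParseTree

namespace ContextFreeGrammar

open ParseTree

variable {T : Type*} (g : ContextFreeGrammar T)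

/-- Leaves may carry nonterminals, so that these trees also describe derivations of sentential
forms. -/
inductive IsParseTree : ParseTree T g.NT → Prop
  | leaf (s : Symbol T g.NT) : IsParseTree (.leaf s)
  | node (r : ContextFreeRule T g.NT) (hr : r ∈ g.rules) (c : List (ParseTree T g.NT))
      (hc : c.map root = r.output) (hcs : ∀ t ∈ c, IsParseTree t) : IsParseTree (.node r.input c)

variable {g}

theorem derives_flatten_map_yield {f : List (ParseTree T g.NT)}
    (h : ∀ t ∈ f, g.Derives [t.root] t.yield) : g.Derives (f.map root) (f.map yield).flatten := by
  induction f with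
  | nil => rfl
  | cons t f ih =>
    have ht : g.Derives ([t.root] ++ f.map root) (t.yield ++ f.map root) :=
      (h t mem_cons_self).append_right _
    exact ht.trans ((ih fun u hu => h u (mem_cons_of_mem t hu)).append_left _)

theorem IsParseTree.derives {t : ParseTree T g.NT} (ht : g.IsParseTree t) :
    g.Derives [t.root] t.yield := by
  induction ht with
  | leaf s => simp only [root, yield]; rfl
  | node r hr c hc _ ih =>
    have hstep : g.Produces [.nonterminal r.input] (c.map root) :=
      ⟨r, hr, hc ▸ ContextFreeRule.Rewrites.input_output⟩
    rw [root, yield]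
    exact hstep.trans_derives (derives_flatten_map_yield ih)

theorem exists_parseForest_of_derives {u v : List (Symbol T g.NT)} (h : g.Derives u v) :
    ∃ f : List (ParseTree T g.NT),
      f.map root = u ∧ (∀ t ∈ f, g.IsParseTree t) ∧ (f.map yield).flatten = v := by
  induction h using Relation.ReflTransGen.head_induction_on with
  | refl =>
    refine ⟨v.map leaf, ?_, ?_, ?_⟩
    · simp [Function.comp_def, root]
    · simp only [mem_map]
      rintro _ ⟨s, -, rfl⟩
      exact .leaf s
    · induction v <;> simp_all [yield]
  | head hp _ ih =>
    obtain ⟨f, hroot, hf, hyield⟩ := ih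
    obtain ⟨r, hr, hrw⟩ := hp
    obtain ⟨p, q, rfl, rfl⟩ := hrw.exists_parts
    obtain ⟨f₁, f₂₃, rfl, rfl, hf₂₃⟩ := map_eq_append_iff.1 (hroot.trans (append_assoc _ _ _))
    obtain ⟨f₂, f₃, rfl, hf₂, rfl⟩ := map_eq_append_iff.1 hf₂₃
    refine ⟨f₁ ++ node r.input f₂ :: f₃, by simp [root], ?_, ?_⟩
    · simp only [mem_append, mem_cons]
      rintro t (ht | rfl | ht)
      · exact hf t (by simp [ht])
      · exact .node r hr f₂ hf₂ fun t ht => hf t (by simp [ht])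
      · exact hf t (by simp [ht])
    · simpa [yield] using hyield

theorem mem_language_iff_exists_parseTree {w : List T} :
    w ∈ g.language ↔ ∃ t : ParseTree T g.NT,
      g.IsParseTree t ∧ t.root = .nonterminal g.initial ∧ t.yield = w.map .terminal := by
  constructor
  · intro hw
    obtain ⟨f, hroot, hf, hyield⟩ := exists_parseForest_of_derives hw
    obtain ⟨t, rfl, ht⟩ := map_eq_singleton_iff.1 hroot
    exact ⟨t, hf t mem_cons_self, ht, by simpa using hyield⟩
  · rintro ⟨t, ht, hroot, hyield⟩
    rw [mem_language_iff, ← hroot, ← hyield]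
    exact ht.derives

theorem IsParseTree.of_plug {K : Context T g.NT} {s : ParseTree T g.NT}
    (h : g.IsParseTree (plug K s)) : g.IsParseTree s := by
  induction K with
  | nil => exact h
  | cons f K ih =>
    obtain ⟨n, l, r⟩ := f
    cases h with
    | node _ _ _ _ hcs => exact ih (hcs _ (by simp))

theorem IsParseTree.plug_of_root_eq {K : Context T g.NT} {s s' : ParseTree T g.NT}
    (h : g.IsParseTree (plug K s)) (hs' : g.IsParseTree s') (hroot : s'.root = s.root) :
    g.IsParseTree (plug K s') := by
  induction K with
  | nil => exact hs'
  | cons f K ih =>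
    obtain ⟨n, l, r⟩ := f
    cases h with
    | node r' hr' _ hc hcs =>
      refine .node r' hr' _ ?_ ?_
      · simpa [root_plug_congr (K := K) hroot] using hc
      · simp only [mem_append, mem_cons]
        rintro t (ht | rfl | ht)
        · exact hcs t (by simp [ht])
        · exact ih (hcs _ (by simp))
        · exact hcs t (by simp [ht])

theorem IsParseTree.iterate_plug {K : Context T g.NT} {u : ParseTree T g.NT}
    (h : g.IsParseTree (plug K u)) (hroot : (plug K u).root = u.root) (i : ℕ) :
    g.IsParseTree ((plug K)^[i] u) ∧ ((plug K)^[i] u).root = u.root := by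
  induction i with
  | zero => exact ⟨h.of_plug, rfl⟩
  | succ i ih =>
    rw [Function.iterate_succ_apply']
    exact ⟨h.plug_of_root_eq ih.1 ih.2, (root_plug_congr ih.2).trans hroot⟩

theorem IsParseTree.length_yield_le {m : ℕ} (hm : 1 ≤ m)
    (hrules : ∀ r ∈ g.rules, r.output.length ≤ m) {t : ParseTree T g.NT}
    (ht : g.IsParseTree t) : t.yield.length ≤ m ^ t.height := by
  induction ht with
  | leaf s => simp [yield, height]
  | node r hr c hc _ ih =>
    set H := (c.map height).foldr max 0
    have hchild : ∀ n ∈ (c.map yield).map length, n ≤ m ^ H := by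
      simp only [map_map, mem_map, Function.comp_apply]
      rintro _ ⟨t, ht, rfl⟩
      have hlt := height_lt_height_node (n := r.input) ht
      rw [height] at hlt
      exact (ih t ht).trans (Nat.pow_le_pow_right hm (by omega))
    have hlen : c.length ≤ m := by simpa [← hc] using hrules r hr
    rw [yield, height, length_flatten, pow_succ']
    calc ((c.map yield).map length).sum ≤ c.length * m ^ H := by
          simpa using sum_le_card_nsmul _ _ hchild
      _ ≤ m * m ^ H := Nat.mul_le_mul_right _ hlen

/-- Pigeonhole along a longest path: `S` is the set of labels met above `t`. -/
theorem IsParseTree.exists_repeat_or_mem [DecidableEq g.NT] {t : ParseTree T g.NT}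
    {S : Finset g.NT} (ht : g.IsParseTree t) (hS : S ⊆ g.rules.image (·.input))
    (hcard : t.height + S.card = (g.rules.image (·.input)).card + 1) :
    (∃ K K' u, K' ≠ [] ∧ t = plug K (plug K' u) ∧ (plug K' u).root = u.root) ∨
      ∃ K u A, A ∈ S ∧ t = plug K u ∧ u.root = .nonterminal A := by
  obtain ⟨n, hn⟩ : ∃ n, t.height = n := ⟨_, rfl⟩
  induction n generalizing t S with
  | zero =>
    have := Finset.card_le_card hS
    omega
  | succ n ih =>
    cases ht with
    | leaf s => simp [height] at hn
    | node r hr c hc hcs =>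
      by_cases hA : r.input ∈ S
      · exact .inr ⟨[], _, r.input, hA, rfl, rfl⟩
      have hAS : insert r.input S ⊆ g.rules.image (·.input) :=
        Finset.insert_subset (Finset.mem_image_of_mem _ hr) hS
      have hAcard := Finset.card_insert_of_notMem hA
      have hn0 : n ≠ 0 := by
        rintro rfl
        have := Finset.card_le_card hAS
        omega
      obtain ⟨t, ht, htn⟩ := exists_mem_height_eq hn (Nat.pos_of_ne_zero hn0)
      obtain ⟨l, l', rfl⟩ := append_of_mem ht
      rcases ih (hcs t ht) hAS (by omega) htn with
        ⟨K, K', u, hK', rfl, hroot⟩ | ⟨K, u, B, hB, rfl, hu⟩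
      · exact .inl ⟨(r.input, l, l') :: K, K', u, hK', rfl, hroot⟩
      rcases Finset.mem_insert.1 hB with rfl | hB
      · exact .inl ⟨[], (r.input, l, l') :: K, u, cons_ne_nil _ _, rfl, hu.symm⟩
      · exact .inr ⟨(r.input, l, l') :: K, u, B, hB, rfl, hu⟩

theorem IsParseTree.exists_short_repeat [DecidableEq g.NT] {m : ℕ} (hm : 1 ≤ m)
    (hrules : ∀ r ∈ g.rules, r.output.length ≤ m) {t : ParseTree T g.NT} (ht : g.IsParseTree t)
    (hh : (g.rules.image (·.input)).card + 1 ≤ t.height) :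
    ∃ K K' u, K' ≠ [] ∧ t = plug K (plug K' u) ∧ (plug K' u).root = u.root ∧
      (plug K' u).yield.length ≤ m ^ ((g.rules.image (·.input)).card + 1) := by
  obtain ⟨K₀, s, rfl, hs⟩ := exists_plug_height_eq (Nat.succ_pos _) hh
  have hs' := ht.of_plug
  rcases hs'.exists_repeat_or_mem (Finset.empty_subset _) (by simp [hs]) with
    ⟨K₁, K', u, hK', rfl, hroot⟩ | ⟨_, _, _, h, _⟩
  · refine ⟨K₀ ++ K₁, K', u, hK', (plug_append _ _ _).symm, hroot, ?_⟩
    calc (plug K' u).yield.length ≤ (plug K₁ (plug K' u)).yield.length := by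
          simp only [yield_plug, length_append]; omega
      _ ≤ m ^ (plug K₁ (plug K' u)).height := hs'.length_yield_le hm hrules
      _ = _ := by rw [hs]
  · simp at h

theorem IsParseTree.exists_pumpable [DecidableEq g.NT] {m : ℕ} (hm : 2 ≤ m)
    (hrules : ∀ r ∈ g.rules, r.output.length ≤ m) {t : ParseTree T g.NT} (ht : g.IsParseTree t)
    (hmin : ∀ t', g.IsParseTree t' → t'.root = t.root → t'.yield = t.yield → t.size ≤ t'.size)
    (hlong : m ^ ((g.rules.image (·.input)).card + 1) ≤ t.yield.length) :
    ∃ K K' u, t = plug K (plug K' u) ∧ leftYield K' ++ rightYield K' ≠ [] ∧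
      (plug K' u).yield.length ≤ m ^ ((g.rules.image (·.input)).card + 1) ∧
      ∀ i, g.IsParseTree (plug K ((plug K')^[i] u)) ∧ (plug K ((plug K')^[i] u)).root = t.root := by
  have htall : (g.rules.image (·.input)).card + 1 ≤ t.height := by
    by_contra! h
    have := ht.length_yield_le (by omega) hrules
    have := Nat.pow_lt_pow_right hm h
    omega
  obtain ⟨K, K', u, hK', rfl, hrep, hshort⟩ := ht.exists_short_repeat (by omega) hrules htall
  have hpump (i : ℕ) : g.IsParseTree (plug K ((plug K')^[i] u)) ∧
      (plug K ((plug K')^[i] u)).root = (plug K (plug K' u)).root := by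
    obtain ⟨hi, hiroot⟩ := ht.of_plug.iterate_plug hrep i
    exact ⟨ht.plug_of_root_eq hi (hiroot.trans hrep.symm), root_plug_congr (hiroot.trans hrep.symm)⟩
  refine ⟨K, K', u, rfl, fun hnil => ?_, hshort, hpump⟩
  obtain ⟨hl, hr⟩ := append_eq_nil_iff.1 hnil
  have hle := hmin _ (hpump 0).1 (hpump 0).2 (by simp [yield_plug, hl, hr])
  have hlt : u.size < (plug K' u).size := by
    have := size_le_size_plug K' u
    have := length_pos_iff.2 hK'
    omega
  exact (size_plug_lt_size_plug K hlt).not_ge hle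

theorem exists_pumping (g : ContextFreeGrammar T) :
    ∃ p, ∀ w ∈ g.language, p ≤ w.length → ∃ u v x y z : List T,
      w = u ++ v ++ x ++ y ++ z ∧ v ++ y ≠ [] ∧ (v ++ x ++ y).length ≤ p ∧
      ∀ i, u ++ (replicate i v).flatten ++ x ++ (replicate i y).flatten ++ z ∈ g.language := by
  classical
  set m := max 2 (g.rules.sup (·.output.length))
  have hrules : ∀ r ∈ g.rules, r.output.length ≤ m := fun r hr =>
    (Finset.le_sup (f := (·.output.length)) hr).trans (le_max_right _ _)
  refine ⟨m ^ ((g.rules.image (·.input)).card + 1), fun w hw hp => ?_⟩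
  obtain ⟨t, ⟨ht, hroot, hyield⟩, hmin⟩ := (measure size).wf.has_min
    {t | g.IsParseTree t ∧ t.root = .nonterminal g.initial ∧ t.yield = w.map .terminal}
    (mem_language_iff_exists_parseTree.1 hw)
  obtain ⟨K, K', u, rfl, hne, hshort, hpump⟩ := ht.exists_pumpable (le_max_left _ _) hrules
    (fun t' ht' hr hy => not_lt.1 (hmin t' ⟨ht', hr.trans hroot, hy.trans hyield⟩))
    (by simpa [hyield] using hp)
  have hy : w.map .terminal =
      leftYield K ++ (leftYield K' ++ (u.yield ++ (rightYield K' ++ rightYield K))) := by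
    rw [← hyield, yield_plug, yield_plug]; simp
  obtain ⟨U, _, rfl, hU, hw₁⟩ := map_eq_append_iff.1 hy
  obtain ⟨V, _, rfl, hV, hw₂⟩ := map_eq_append_iff.1 hw₁
  obtain ⟨X, _, rfl, hX, hw₃⟩ := map_eq_append_iff.1 hw₂
  obtain ⟨Y, Z, rfl, hY, hZ⟩ := map_eq_append_iff.1 hw₃
  refine ⟨U, V, X, Y, Z, by simp, fun hVY => hne ?_, ?_, fun i => ?_⟩
  · obtain ⟨rfl, rfl⟩ := append_eq_nil_iff.1 hVY
    simp [← hV, ← hY]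
  · simpa [yield_plug, ← hV, ← hX, ← hY] using hshort
  · refine mem_language_iff_exists_parseTree.2
      ⟨_, (hpump i).1, (hpump i).2.trans hroot, ?_⟩
    simp [yield_plug, yield_iterate_plug, ← hU, ← hV, ← hX, ← hY, ← hZ]

end ContextFreeGrammar

theorem List.lt_add_length_of_notMem_drop_of_notMem_take {α : Type*} {w u s r : List α}
    {a b : α} {p q : ℕ} (hw : w = u ++ s ++ r) (ha : a ∈ s) (hb : b ∈ s)
    (hap : a ∉ w.drop p) (hbq : b ∉ w.take q) : q < p + s.length := by
  have hu : u.length < p := by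
    by_contra! h
    apply hap
    rw [hw, append_assoc, drop_append_of_le_length h]
    simp [ha]
  have hq : q < u.length + s.length := by
    by_contra! h
    apply hbq
    rw [hw, take_append, take_of_length_le (by simpa using h)]
    simp [hb]
  omega

namespace ShuffleDyck

variable {k : ℕ}

theorem count_true_eq_count_false_of_mem_of_mem {u v x y z : List (Fin k × Bool)}
    (h : u ++ v ++ x ++ y ++ z ∈ ShuffleDyck k) (h' : u ++ x ++ z ∈ ShuffleDyck k) (κ : Fin k) :
    (v ++ y).count (κ, true) = (v ++ y).count (κ, false) := by
  have := (h κ).1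
  have := (h' κ).1
  simp only [count_append] at *
  omega

/-- The word `(_i^n (_j^n )_i^n )_j^n`. -/
def crossingWord (i j : Fin k) (n : ℕ) : List (Fin k × Bool) :=
  replicate n (i, true) ++ replicate n (j, true) ++ replicate n (i, false) ++
    replicate n (j, false)

theorem crossingWord_mem {i j : Fin k} (hij : i ≠ j) (n : ℕ) :
    crossingWord i j n ∈ ShuffleDyck k := by
  intro κ
  suffices (crossingWord i j n).count (κ, true) = (crossingWord i j n).count (κ, false) ∧
      ∀ m, ((crossingWord i j n).take m).count (κ, false) ≤
        ((crossingWord i j n).take m).count (κ, true) from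
    ⟨this.1, fun p hp => prefix_iff_eq_take.1 hp ▸ this.2 _⟩
  obtain rfl | hi := eq_or_ne κ i
  · simp [crossingWord, count_replicate, take_append, take_replicate, hij.symm]
    omega
  obtain rfl | hj := eq_or_ne κ j
  · simp [crossingWord, count_replicate, take_append, take_replicate, hij]
    omega
  · simp [crossingWord, count_replicate, take_append, take_replicate, hi.symm, hj.symm]

theorem lt_length_of_crossingWord_eq {i j κ : Fin k} (hij : i ≠ j) {n : ℕ}
    {u s r : List (Fin k × Bool)} (hw : crossingWord i j n = u ++ s ++ r)
    (hopen : (κ, true) ∈ s) (hclose : (κ, false) ∈ s) : n < s.length := by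
  have key (p q : ℕ) :=
    lt_add_length_of_notMem_drop_of_notMem_take (p := p) (q := q) hw hopen hclose
  obtain rfl | hi := eq_or_ne κ i
  · have := key n (n + n) (by simp [crossingWord, hij])
      (by simp [crossingWord, take_append, take_replicate])
    omega
  obtain rfl | hj := eq_or_ne κ j
  · have := key (n + n) (n + n + n) (by simp [crossingWord, drop_append, drop_replicate, hi])
      (by simp [crossingWord, take_append, take_replicate, hi])
    omega
  · have := key 0 n (by simp [crossingWord, hi, hj]) (by simp [crossingWord])
    omega

end ShuffleDyck

theorem Language.IsContextFree.exists_pumping {T : Type*} {L : Language T}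
    (hL : L.IsContextFree) :
    ∃ p, ∀ w ∈ L, p ≤ w.length → ∃ u v x y z : List T,
      w = u ++ v ++ x ++ y ++ z ∧ v ++ y ≠ [] ∧ (v ++ x ++ y).length ≤ p ∧
      ∀ i, u ++ (replicate i v).flatten ++ x ++ (replicate i y).flatten ++ z ∈ L := by
  obtain ⟨g, rfl⟩ := hL
  exact g.exists_pumping

theorem shuffleDyck_not_contextFree (k : ℕ) (hk : 2 ≤ k) :
    ¬ (ShuffleDyck k).IsContextFree := by
  intro hcf
  obtain ⟨p, hp⟩ := hcf.exists_pumping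
  have hij : (⟨0, by omega⟩ : Fin k) ≠ ⟨1, by omega⟩ := by simp
  have hmem := ShuffleDyck.crossingWord_mem hij p
  obtain ⟨u, v, x, y, z, hw, hvy, hlen, hpump⟩ :=
    hp _ hmem (by simp [ShuffleDyck.crossingWord])
  have hbal := ShuffleDyck.count_true_eq_count_false_of_mem_of_mem (hw ▸ hmem)
    (by simpa using hpump 0)
  obtain ⟨⟨κ, b⟩, hκ⟩ := exists_mem_of_ne_nil _ hvy
  have hopen : (κ, true) ∈ v ++ y := by
    cases b
    · rwa [← count_pos_iff, hbal, count_pos_iff]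
    · exact hκ
  have hclose : (κ, false) ∈ v ++ y := by
    rwa [← count_pos_iff, ← hbal, count_pos_iff]
  have := ShuffleDyck.lt_length_of_crossingWord_eq hij (u := u) (s := v ++ x ++ y) (r := z)
    (by rw [hw]; simp) (by simp at hopen ⊢; tauto) (by simp at hclose ⊢; tauto)
  omega
end

section
/- The intersection of 2-Shuffle Dyck with the language of all words of the form (^a [^b )^c ]^d (a, b, c, d ∈ ℕ) equals the crossing language { (^n [^m )^n ]^m : n, m ∈ ℕ }. -/
/-- The crossing language `{ (^n [^m )^n ]^m : n, m ∈ ℕ }`. -/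
def Crossing : Language (Fin 2 × Bool) :=
  {w | ∃ n m : ℕ,
    w = List.replicate n ((0 : Fin 2), true) ++ List.replicate m ((1 : Fin 2), true) ++
        List.replicate n ((0 : Fin 2), false) ++ List.replicate m ((1 : Fin 2), false)}

lemma crossing_mem_shuffleDyck (n m : ℕ) :
    (List.replicate n ((0 : Fin 2), true) ++ List.replicate m ((1 : Fin 2), true) ++
        List.replicate n ((0 : Fin 2), false) ++ List.replicate m ((1 : Fin 2), false))
      ∈ ShuffleDyck 2 := by
  intro κ
  constructor
  · fin_cases κ <;> simp [List.count_append, List.count_replicate]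
  · intro p hp
    obtain ⟨t, ht⟩ := hp
    have hp' : p = (List.replicate n ((0 : Fin 2), true) ++ List.replicate m ((1 : Fin 2), true) ++
        List.replicate n ((0 : Fin 2), false) ++ List.replicate m ((1 : Fin 2), false)).take
          p.length := by
      rw [← ht, List.take_left]
    rw [hp']
    rw [List.append_assoc, List.append_assoc,
      List.take_append, List.take_append,
      List.take_append]
    fin_cases κ <;>
      simp [List.take_replicate, List.count_append, List.count_replicate] <;> omega

theorem shuffleDyck_inter_eq_crossing :
    {w : List (Fin 2 × Bool) | w ∈ ShuffleDyck 2 ∧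
      ∃ a b c d : ℕ,
        w = List.replicate a ((0 : Fin 2), true) ++ List.replicate b ((1 : Fin 2), true) ++
            List.replicate c ((0 : Fin 2), false) ++ List.replicate d ((1 : Fin 2), false)} =
    Crossing := by
  ext w
  constructor
  · rintro ⟨hsd, a, b, c, d, rfl⟩
    have h0 := (hsd 0).1
    have h1 := (hsd 1).1
    simp [List.count_append, List.count_replicate] at h0 h1
    exact ⟨a, b, by rw [h0, h1]⟩
  · rintro ⟨n, m, rfl⟩
    exact ⟨crossing_mem_shuffleDyck n m, n, m, n, m, rfl⟩
end

section
/- Let a and b be distinct symbols of an alphabet Σ, let p ≥ 1, and let s = a^p b^p a^p b^p. Then for every decomposition s = u v w x y with |v w x| ≤ p and |v x| ≥ 1, the word u w y does not belong to the copy language { t ++ t : t a word over Σ }. -/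
theorem copy_language_pumping {α : Type*} (a b : α) (hab : a ≠ b) (p : ℕ) (hp : 1 ≤ p)
    (u v w x y : List α)
    (hs : List.replicate p a ++ List.replicate p b ++ List.replicate p a ++
        List.replicate p b = u ++ v ++ w ++ x ++ y)
    (hlen : (v ++ w ++ x).length ≤ p) (hne : 1 ≤ (v ++ x).length) :
    u ++ w ++ y ∉ {s : List α | ∃ t : List α, s = t ++ t} := by
  rintro ⟨t, ht⟩
  simp only [List.length_append] at hlen hne
  set s : List α := List.replicate p a ++ List.replicate p b ++ List.replicate p a ++
      List.replicate p b with hs_def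
  have hslen : s.length = 4 * p := by
    simp only [hs_def, List.length_append, List.length_replicate]; omega
  have htot : u.length + v.length + w.length + x.length + y.length = 4 * p := by
    have := congrArg List.length hs
    simp only [List.length_append] at this
    omega
  have hlt2 : u.length + w.length + y.length = 2 * t.length := by
    have := congrArg List.length ht
    simp only [List.length_append] at this
    omega
  set m := t.length with hm
  set d := v.length + x.length with hd_def
  have hd4 : d = 4 * p - 2 * m := by omega
  have hd1 : 1 ≤ d := hne
  have hdp : d ≤ p := by omega
  have hm1 : p ≤ m := by omega
  have hm2 : m ≤ 2 * p - 1 := by omega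
  -- getters for s
  have hgA : ∀ j, j < p → s[j]? = some a := by
    intro j hj
    rw [hs_def, List.getElem?_append_left (by simp; omega),
      List.getElem?_append_left (by simp; omega),
      List.getElem?_append_left (by simp; omega), List.getElem?_replicate, if_pos hj]
  have hgB : ∀ j, p ≤ j → j < 2 * p → s[j]? = some b := by
    intro j hj1 hj2
    rw [hs_def, List.getElem?_append_left (by simp; omega),
      List.getElem?_append_left (by simp; omega),
      List.getElem?_append_right (by simp; omega), List.getElem?_replicate,
      if_pos (by simp; omega)]
  have hgC : ∀ j, 2 * p ≤ j → j < 3 * p → s[j]? = some a := by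
    intro j hj1 hj2
    rw [hs_def, List.getElem?_append_left (by simp; omega),
      List.getElem?_append_right (by simp; omega), List.getElem?_replicate,
      if_pos (by simp; omega)]
  have hgD : ∀ j, 3 * p ≤ j → j < 4 * p → s[j]? = some b := by
    intro j hj1 hj2
    rw [hs_def, List.getElem?_append_right (by simp; omega), List.getElem?_replicate,
      if_pos (by simp; omega)]
  -- prefix fact
  have hpre : ∀ k, k < u.length → (u ++ w ++ y)[k]? = s[k]? := by
    intro k hk
    have l1 : (u ++ w ++ y)[k]? = u[k]? := by
      rw [show u ++ w ++ y = u ++ (w ++ y) by simp, List.getElem?_append_left hk]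
    have l2 : s[k]? = u[k]? := by
      rw [hs, show u ++ v ++ w ++ x ++ y = u ++ (v ++ w ++ x ++ y) by simp,
        List.getElem?_append_left hk]
    rw [l1, l2]
  -- suffix fact
  have hsuf : ∀ k, u.length + w.length ≤ k → (u ++ w ++ y)[k]? = s[k + d]? := by
    intro k hk
    have l1 : (u ++ w ++ y)[k]? = y[k - (u.length + w.length)]? := by
      rw [List.getElem?_append_right (by simp only [List.length_append]; omega)]
      congr 1
      simp only [List.length_append]
    have l2 : s[k + d]? = y[k - (u.length + w.length)]? := by
      rw [hs, show u ++ v ++ w ++ x ++ y = (u ++ v ++ w ++ x) ++ y by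
          simp [List.append_assoc],
        List.getElem?_append_right (by simp only [List.length_append]; omega)]
      congr 1
      simp only [List.length_append]
      omega
    rw [l1, l2]
  -- periodicity from t ++ t
  have hper : ∀ k, k < m → (u ++ w ++ y)[k]? = (u ++ w ++ y)[k + m]? := by
    intro k hk
    rw [ht, List.getElem?_append_left hk, List.getElem?_append_right (by omega)]
    congr 1
    omega
  rcases le_or_gt (u.length + v.length + w.length + x.length) (2 * p) with hB | hBC
  · -- window inside first half: use k = m - 1
    have h1 : (u ++ w ++ y)[m - 1]? = some a := by
      rw [hsuf (m - 1) (by omega), show m - 1 + d = 4 * p - m - 1 by omega]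
      exact hgC _ (by omega) (by omega)
    have h2 : (u ++ w ++ y)[m - 1 + m]? = some b := by
      rw [hsuf (m - 1 + m) (by omega), show m - 1 + m + d = 4 * p - 1 by omega]
      exact hgD _ (by omega) (by omega)
    rw [hper (m - 1) (by omega), h2] at h1
    exact hab (Option.some.inj h1).symm
  rcases le_or_gt (2 * p) u.length with hA | hC
  · -- window inside second half: use k = 2p - 1 - m
    have h1 : (u ++ w ++ y)[2 * p - 1 - m]? = some a := by
      rw [hpre _ (by omega)]
      exact hgA _ (by omega)
    have h2 : (u ++ w ++ y)[2 * p - 1 - m + m]? = some b := by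
      rw [hpre _ (by omega), show 2 * p - 1 - m + m = 2 * p - 1 by omega]
      exact hgB _ (by omega) (by omega)
    rw [hper (2 * p - 1 - m) (by omega), h2] at h1
    exact hab (Option.some.inj h1).symm
  · -- window straddles the middle: use k = p - 1
    have h1 : (u ++ w ++ y)[p - 1]? = some a := by
      rw [hpre _ (by omega)]
      exact hgA _ (by omega)
    have h2 : (u ++ w ++ y)[p - 1 + m]? = some b := by
      rw [hsuf (p - 1 + m) (by omega), show p - 1 + m + d = 5 * p - m - 1 by omega]
      exact hgD _ (by omega) (by omega)
    rw [hper (p - 1) (by omega), h2] at h1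
    exact hab (Option.some.inj h1).symm
end
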